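/- arXiv:1612.04846 — 3 statements merged into one kernel-verified Lean document; each statement's English description precedes it below -/
import Mathlib

section
/- Let A be a symmetric positive definite matrix and let 𝔸 = Λ·A be a positive rescaling by Λ > 0, with data f̃ = Λ^α f. If u = 𝔸^{-α} f̃ and u_r = r(A) A^{-β} f with E = max_{t∈(0,1]}|t^{β-α} - r(t)|, then for every real γ: ‖u_r - u‖_{𝔸^γ} ≤ E · Λ^{β-α} · ‖f̃‖_{𝔸^{γ-2β}}. -/
open Matrix Real

/-- Spectral real power of an SPD matrix given by `A = W D Wᵀ`: `A^γ := W D^γ Wᵀ`. -/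
noncomputable def matPow {N : ℕ} (W : Matrix (Fin N) (Fin N) ℝ) (D : Fin N → ℝ) (γ : ℝ) :
    Matrix (Fin N) (Fin N) ℝ :=
  W * Matrix.diagonal (fun i => D i ^ γ) * Wᵀ

/-- Spectral application of a scalar function `r` to `A = W D Wᵀ`: `r(A) := W r(D) Wᵀ`. -/
noncomputable def matFun {N : ℕ} (W : Matrix (Fin N) (Fin N) ℝ) (D : Fin N → ℝ) (r : ℝ → ℝ) :
    Matrix (Fin N) (Fin N) ℝ :=
  W * Matrix.diagonal (fun i => r (D i)) * Wᵀ

/-- The norm `‖v‖_{A^γ} = sqrt (vᵀ A^γ v)`. -/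
noncomputable def wnorm {N : ℕ} (W : Matrix (Fin N) (Fin N) ℝ) (D : Fin N → ℝ) (γ : ℝ)
    (v : Fin N → ℝ) : ℝ :=
  Real.sqrt (v ⬝ᵥ (matPow W D γ).mulVec v)

lemma sandwich {N : ℕ} (W : Matrix (Fin N) (Fin N) ℝ) (hW : Wᵀ * W = 1)
    (c : Fin N → ℝ) (v : Fin N → ℝ) (i : Fin N) :
    Wᵀ.mulVec ((W * Matrix.diagonal c * Wᵀ).mulVec v) i
      = c i * Wᵀ.mulVec v i := by
  rw [mulVec_mulVec, ← Matrix.mul_assoc, ← Matrix.mul_assoc, hW, Matrix.one_mul,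
    ← mulVec_mulVec]
  exact Matrix.mulVec_diagonal c _ i

lemma wnorm_eq {N : ℕ} (W : Matrix (Fin N) (Fin N) ℝ) (hW : Wᵀ * W = 1)
    (D : Fin N → ℝ) (γ : ℝ) (v : Fin N → ℝ) :
    wnorm W D γ v = Real.sqrt (∑ i, D i ^ γ * (Wᵀ.mulVec v i)^2) := by
  unfold wnorm matPow
  congr 1
  rw [show W * Matrix.diagonal (fun i => D i ^ γ) * Wᵀ
      = W * (Matrix.diagonal (fun i => D i ^ γ) * Wᵀ) from Matrix.mul_assoc _ _ _,
    ← mulVec_mulVec, Matrix.dotProduct_mulVec, ← Matrix.mulVec_transpose,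
    ← mulVec_mulVec]
  unfold dotProduct
  refine Finset.sum_congr rfl fun i _ => ?_
  rw [Matrix.mulVec_diagonal]
  ring

lemma rpow_sq {x : ℝ} (hx : 0 ≤ x) (a : ℝ) : (x^a)^2 = x^(2*a) := by
  rw [← Real.rpow_natCast (x^a) 2, ← Real.rpow_mul hx]
  norm_num [mul_comm]

lemma keyineq (Λ d gv E' rv : ℝ) (hΛ : 0 < Λ) (hd : 0 < d) (γ α : ℝ) (β : ℕ)
    (hr : |d ^ ((β:ℝ) - α) - rv| ≤ E') :
    (Λ*d)^γ * (d^(-(β:ℝ)) * (rv - d^((β:ℝ)-α)) * gv)^2 ≤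
      (E' * Λ^((β:ℝ)-α))^2 * ((Λ*d)^(γ-2*(β:ℝ)) * (Λ^α * gv)^2) := by
  have h0 : (rv - d^((β:ℝ)-α))^2 ≤ E'^2 := by
    have h : |rv - d^((β:ℝ)-α)| ≤ E' := by rwa [abs_sub_comm]
    calc (rv - d^((β:ℝ)-α))^2 = |rv - d^((β:ℝ)-α)|^2 := (sq_abs _).symm
      _ ≤ E'^2 := pow_le_pow_left₀ (abs_nonneg _) h 2
  have hld : (0:ℝ) < Λ * d := mul_pos hΛ hd
  have h1 : d^γ * d^(2 * -(β:ℝ)) = d^(γ - 2*(β:ℝ)) := by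
    rw [← Real.rpow_add hd]; congr 1; ring
  have h2 : Λ^(2*((β:ℝ)-α)) * Λ^(γ-2*(β:ℝ)) * Λ^(2*α) = Λ^γ := by
    rw [← Real.rpow_add hΛ, ← Real.rpow_add hΛ]; congr 1; ring
  calc (Λ*d)^γ * (d^(-(β:ℝ)) * (rv - d^((β:ℝ)-α)) * gv)^2
      = (Λ*d)^γ * (d^(-(β:ℝ)))^2 * gv^2 * (rv - d^((β:ℝ)-α))^2 := by ring
    _ ≤ (Λ*d)^γ * (d^(-(β:ℝ)))^2 * gv^2 * E'^2 := by
        apply mul_le_mul_of_nonneg_left h0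
        have := Real.rpow_nonneg hld.le γ
        positivity
    _ = (E' * Λ^((β:ℝ)-α))^2 * ((Λ*d)^(γ-2*(β:ℝ)) * (Λ^α * gv)^2) := by
        rw [mul_pow E', mul_pow, Real.mul_rpow hΛ.le hd.le,
          Real.mul_rpow hΛ.le hd.le, rpow_sq hd.le, rpow_sq hΛ.le, rpow_sq hΛ.le]
        calc Λ^γ * d^γ * d^(2 * -(β:ℝ)) * gv^2 * E'^2
            = Λ^γ * (d^γ * d^(2 * -(β:ℝ))) * gv^2 * E'^2 := by ring
          _ = Λ^γ * d^(γ-2*(β:ℝ)) * gv^2 * E'^2 := by rw [h1]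
          _ = (Λ^(2*((β:ℝ)-α)) * Λ^(γ-2*(β:ℝ)) * Λ^(2*α)) * d^(γ-2*(β:ℝ)) * gv^2 * E'^2 := by
              rw [h2]
          _ = E'^2 * Λ^(2*((β:ℝ)-α)) * (Λ^(γ-2*(β:ℝ)) * d^(γ-2*(β:ℝ)) * (Λ^(2*α) * gv^2)) := by
              ring

/-- `A = W D Wᵀ` is SPD with spectrum in `(0,1]`, `𝔸 = Λ • A` (eigenvalues `Λ * D i`),
`f̃ = Λ^α • f`.  If `u = 𝔸^{-α} f̃` and `u_r = r(A) A^{-β} f` with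
`E ≥ max_{t∈(0,1]} |t^{β-α} - r t|`, then for every real `γ`,
`‖u_r - u‖_{𝔸^γ} ≤ E * Λ^{β-α} * ‖f̃‖_{𝔸^{γ-2β}}`. -/
theorem stmt1 {N : ℕ} (W : Matrix (Fin N) (Fin N) ℝ) (D : Fin N → ℝ)
    (hW : Wᵀ * W = 1) (hD : ∀ i, D i ∈ Set.Ioc (0 : ℝ) 1)
    (Λ : ℝ) (hΛ : 0 < Λ)
    (α : ℝ) (hα0 : 0 < α) (hα1 : α < 1) (β : ℕ) (hβ : 1 ≤ β)
    (r : ℝ → ℝ) (E : ℝ)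
    (hE : ∀ t ∈ Set.Ioc (0 : ℝ) 1, |t ^ ((β : ℝ) - α) - r t| ≤ E)
    (f ft : Fin N → ℝ) (hft : ft = Λ ^ α • f)
    (u : Fin N → ℝ) (hu : u = (matPow W (fun i => Λ * D i) (-α)).mulVec ft)
    (ur : Fin N → ℝ)
    (hur : ur = (matFun W D r).mulVec ((matPow W D (-(β : ℝ))).mulVec f))
    (γ : ℝ) :
    wnorm W (fun i => Λ * D i) γ (ur - u) ≤
      E * Λ ^ ((β : ℝ) - α) * wnorm W (fun i => Λ * D i) (γ - 2 * β) ft := by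
  have hDpos : ∀ i, 0 < D i := fun i => (hD i).1
  set g := Wᵀ.mulVec f with hg
  have hft' : ∀ i, Wᵀ.mulVec ft i = Λ^α * g i := by
    intro i
    rw [hft, Matrix.mulVec_smul]
    simp [hg]
  have key : ∀ i, Wᵀ.mulVec (ur - u) i
      = (D i)^(-(β:ℝ)) * (r (D i) - (D i)^((β:ℝ)-α)) * g i := by
    intro i
    rw [Matrix.mulVec_sub, Pi.sub_apply]
    have hur' : Wᵀ.mulVec ur i = r (D i) * ((D i)^(-(β:ℝ)) * g i) := by
      rw [hur]
      unfold matFun matPow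
      rw [sandwich W hW, sandwich W hW]
    have hu' : Wᵀ.mulVec u i = (Λ * D i)^(-α) * (Λ^α * g i) := by
      rw [hu]
      unfold matPow
      rw [sandwich W hW, hft' i]
    rw [hur', hu']
    have hcan : (Λ * D i)^(-α) * Λ^α = (D i)^(-α) := by
      rw [Real.mul_rpow hΛ.le (hDpos i).le]
      calc Λ^(-α) * (D i)^(-α) * Λ^α = Λ^(-α) * Λ^α * (D i)^(-α) := by ring
        _ = (D i)^(-α) := by rw [← Real.rpow_add hΛ]; simp
    have hsplit : (D i)^(-(β:ℝ)) * (D i)^((β:ℝ)-α) = (D i)^(-α) := by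
      rw [← Real.rpow_add (hDpos i)]; congr 1; ring
    calc r (D i) * ((D i)^(-(β:ℝ)) * g i) - (Λ * D i)^(-α) * (Λ^α * g i)
        = r (D i) * ((D i)^(-(β:ℝ)) * g i) - ((Λ * D i)^(-α) * Λ^α) * g i := by ring
      _ = r (D i) * ((D i)^(-(β:ℝ)) * g i) - ((D i)^(-(β:ℝ)) * (D i)^((β:ℝ)-α)) * g i := by
          rw [hcan, hsplit]
      _ = (D i)^(-(β:ℝ)) * (r (D i) - (D i)^((β:ℝ)-α)) * g i := by ring
  have hE0 : 0 ≤ E := le_trans (abs_nonneg _) (hE 1 ⟨one_pos, le_refl 1⟩)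
  have hK : 0 ≤ E * Λ ^ ((β:ℝ)-α) := mul_nonneg hE0 (Real.rpow_nonneg hΛ.le _)
  rw [wnorm_eq W hW, wnorm_eq W hW]
  calc Real.sqrt (∑ i, (Λ * D i) ^ γ * (Wᵀ.mulVec (ur - u) i)^2)
      ≤ Real.sqrt ((E * Λ ^ ((β:ℝ)-α))^2
          * ∑ i, (Λ * D i) ^ (γ - 2 * β) * (Wᵀ.mulVec ft i)^2) := by
        apply Real.sqrt_le_sqrt
        rw [Finset.mul_sum]
        apply Finset.sum_le_sum
        intro i _
        rw [key i, hft' i]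
        exact keyineq Λ (D i) (g i) E (r (D i)) hΛ (hDpos i) γ α β
          (hE (D i) (hD i))
    _ = E * Λ ^ ((β:ℝ)-α)
          * Real.sqrt (∑ i, (Λ * D i) ^ (γ - 2 * β) * (Wᵀ.mulVec ft i)^2) := by
        rw [Real.sqrt_mul (sq_nonneg _), Real.sqrt_sq hK]
end

section
/- Let A be SPD, n ≥ 2, v = A^{-n} f, z = A^{-(n-1)} f, and let z', v' be vectors with v̄ := A^{-1} z'. If ‖z' - z‖_{A^{-1}} ≤ με‖z‖_{A^{-1}} and ‖v' - v̄‖_A ≤ νε‖v̄‖_A for some μ, ν, ε > 0, then ‖v' - v‖_A ≤ (μ + ν + μνε)·ε·‖v‖_A. -/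
/-!
`‖x‖_{A^γ}` is the Euclidean norm of `A^{γ/2} x`, so it satisfies the triangle inequality and
`‖A^δ y‖_{A^γ} = ‖y‖_{A^{γ+2δ}}`. As `v = A⁻¹ z` and `v̄ = A⁻¹ z'`, the first hypothesis reads
`‖v̄ - v‖_A ≤ με ‖v‖_A`; then `‖v̄‖_A ≤ (1 + με) ‖v‖_A`, and the triangle inequality through `v̄`
gives `‖v' - v‖_A ≤ νε (1 + με) ‖v‖_A + με ‖v‖_A`.
-/

open Matrix Real

theorem dotProduct_transpose_mul_self_mulVec {m n : Type*} [Fintype m] [Fintype n]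
    {R : Type*} [CommSemiring R] (M : Matrix m n R) (x : n → R) :
    x ⬝ᵥ ((Mᵀ * M) *ᵥ x) = (M *ᵥ x) ⬝ᵥ (M *ᵥ x) := by
  rw [← mulVec_mulVec, dotProduct_mulVec, vecMul_transpose]

theorem EuclideanSpace.norm_toLp_eq_sqrt_dotProduct {n : Type*} [Fintype n] (u : n → ℝ) :
    ‖WithLp.toLp 2 u‖ = √(u ⬝ᵥ u) := by
  simp only [EuclideanSpace.norm_eq, Real.norm_eq_abs, sq, abs_mul_abs_self, dotProduct]

theorem two_step_norm_sub_le {E : Type*} [SeminormedAddCommGroup E] {a b c : E} {μ ν ε : ℝ}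
    (hνε : 0 ≤ ν * ε) (hbc : ‖b - c‖ ≤ μ * ε * ‖c‖) (hab : ‖a - b‖ ≤ ν * ε * ‖b‖) :
    ‖a - c‖ ≤ (μ + ν + μ * ν * ε) * ε * ‖c‖ := by
  have hb : ‖b‖ ≤ ‖c‖ + μ * ε * ‖c‖ := (norm_le_insert' b c).trans (by gcongr)
  calc ‖a - c‖ ≤ ‖a - b‖ + ‖b - c‖ := norm_sub_le_norm_sub_add_norm_sub a b c
    _ ≤ ν * ε * (‖c‖ + μ * ε * ‖c‖) + μ * ε * ‖c‖ := by
      gcongr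
      exact hab.trans (by gcongr)
    _ = (μ + ν + μ * ν * ε) * ε * ‖c‖ := by ring

section matPow

variable {N : ℕ} {W : Matrix (Fin N) (Fin N) ℝ} {D : Fin N → ℝ}

theorem matPow_transpose (γ : ℝ) : (matPow W D γ)ᵀ = matPow W D γ := by
  simp only [matPow, transpose_mul, diagonal_transpose, transpose_transpose, Matrix.mul_assoc]

theorem matPow_mul_matPow (hW : Wᵀ * W = 1) (hD : ∀ i, 0 < D i) (γ δ : ℝ) :
    matPow W D γ * matPow W D δ = matPow W D (γ + δ) := by
  have hdiag : diagonal (fun i => D i ^ γ) * diagonal (fun i => D i ^ δ)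
      = diagonal (fun i => D i ^ (γ + δ)) := by
    rw [diagonal_mul_diagonal]
    exact congrArg diagonal (funext fun i => (rpow_add (hD i) γ δ).symm)
  calc matPow W D γ * matPow W D δ
      = W * diagonal (fun i => D i ^ γ) * (Wᵀ * W) * diagonal (fun i => D i ^ δ) * Wᵀ := by
        simp only [matPow, Matrix.mul_assoc]
    _ = matPow W D (γ + δ) := by
        rw [hW, Matrix.mul_one, Matrix.mul_assoc W, hdiag, matPow]

theorem wnorm_eq_norm_toLp (hW : Wᵀ * W = 1) (hD : ∀ i, 0 < D i) (γ : ℝ) (x : Fin N → ℝ) :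
    wnorm W D γ x = ‖WithLp.toLp 2 (matPow W D (γ / 2) *ᵥ x)‖ := by
  have hsplit : matPow W D γ = (matPow W D (γ / 2))ᵀ * matPow W D (γ / 2) := by
    rw [matPow_transpose, matPow_mul_matPow hW hD, add_halves]
  rw [wnorm, hsplit, dotProduct_transpose_mul_self_mulVec,
    EuclideanSpace.norm_toLp_eq_sqrt_dotProduct]

theorem wnorm_matPow_mulVec (hW : Wᵀ * W = 1) (hD : ∀ i, 0 < D i) (γ δ : ℝ) (y : Fin N → ℝ) :
    wnorm W D γ (matPow W D δ *ᵥ y) = wnorm W D (γ + 2 * δ) y := by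
  rw [wnorm_eq_norm_toLp hW hD, wnorm_eq_norm_toLp hW hD, mulVec_mulVec,
    matPow_mul_matPow hW hD]
  congr 4
  ring

end matPow

theorem stmt5_general {N : ℕ} (W : Matrix (Fin N) (Fin N) ℝ) (D : Fin N → ℝ)
    (hW : Wᵀ * W = 1) (hD : ∀ i, 0 < D i)
    (n : ℕ) (μ ν ε : ℝ) (hν : 0 < ν) (hε : 0 < ε)
    (f z' v' : Fin N → ℝ)
    (v : Fin N → ℝ) (hv : v = (matPow W D (-(n : ℝ))).mulVec f)
    (z : Fin N → ℝ) (hz : z = (matPow W D (-((n : ℝ) - 1))).mulVec f)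
    (vbar : Fin N → ℝ) (hvbar : vbar = (matPow W D (-1)).mulVec z')
    (hz' : wnorm W D (-1) (z' - z) ≤ μ * ε * wnorm W D (-1) z)
    (hv' : wnorm W D 1 (v' - vbar) ≤ ν * ε * wnorm W D 1 vbar) :
    wnorm W D 1 (v' - v) ≤ (μ + ν + μ * ν * ε) * ε * wnorm W D 1 v := by
  have hvz : v = matPow W D (-1) *ᵥ z := by
    rw [hv, hz, mulVec_mulVec, matPow_mul_matPow hW hD]
    congr 2
    ring
  have hsolve : ∀ y, wnorm W D 1 (matPow W D (-1) *ᵥ y) = wnorm W D (-1) y := fun y => by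
    rw [wnorm_matPow_mulVec hW hD]
    norm_num
  have hvbar_v : wnorm W D 1 (vbar - v) ≤ μ * ε * wnorm W D 1 v := by
    rwa [hvbar, hvz, ← mulVec_sub, hsolve, hsolve]
  simp only [wnorm_eq_norm_toLp hW hD, mulVec_sub, WithLp.toLp_sub] at hv' hvbar_v ⊢
  exact two_step_norm_sub_le (by positivity) hvbar_v hv'

/-- Two-step accuracy: with `v = A^{-n} f`, `z = A^{-(n-1)} f`, `v̄ = A^{-1} z'`, if
`‖z' - z‖_{A^{-1}} ≤ μ ε ‖z‖_{A^{-1}}` and `‖v' - v̄‖_A ≤ ν ε ‖v̄‖_A`, then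
`‖v' - v‖_A ≤ (μ + ν + μνε) ε ‖v‖_A`. -/
theorem stmt5 {N : ℕ} (W : Matrix (Fin N) (Fin N) ℝ) (D : Fin N → ℝ)
    (hW : Wᵀ * W = 1) (hD : ∀ i, 0 < D i)
    (n : ℕ) (hn : 2 ≤ n) (μ ν ε : ℝ) (hμ : 0 < μ) (hν : 0 < ν) (hε : 0 < ε)
    (f z' v' : Fin N → ℝ)
    (v : Fin N → ℝ) (hv : v = (matPow W D (-(n : ℝ))).mulVec f)
    (z : Fin N → ℝ) (hz : z = (matPow W D (-((n : ℝ) - 1))).mulVec f)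
    (vbar : Fin N → ℝ) (hvbar : vbar = (matPow W D (-1)).mulVec z')
    (hz' : wnorm W D (-1) (z' - z) ≤ μ * ε * wnorm W D (-1) z)
    (hv' : wnorm W D 1 (v' - vbar) ≤ ν * ε * wnorm W D 1 vbar) :
    wnorm W D 1 (v' - v) ≤ (μ + ν + μ * ν * ε) * ε * wnorm W D 1 v :=
  stmt5_general W D hW hD n μ ν ε hν hε f z' v' v hv z hz vbar hvbar hz' hv'
end

section
/- Let A be SPD with eigenvalues in (0,1] and largest eigenvalue Λ_N, and let r₁, r₂ satisfy |r_i(t) - t^{1-α_i}| ≤ E_i on (0,1] with r_i(Λ_N) - Λ_N^{1-α_i} = -E_i (the error attains -E_i at Λ_N), where α₁ + α₂ = α < 1. Then for f = Ψ_N an eigenvector for Λ_N, the two-step approximation u₂ = r₁(A) r₂(A) A^{-2} f satisfies ‖u₂ - A^{-α} f‖_A / ‖f‖_{A^{-1}} = | (Λ_N^{1-α₁} - E₁)(Λ_N^{1-α₂} - E₂) Λ_N^{-1} - Λ_N^{1-α} |, which equals E₁ + E₂ - E₁E₂ when Λ_N = 1. -/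
open Matrix Real

/-!
The eigenvector `f = Ψ_N` is the column `Wᵀ i0` of the orthogonal matrix `W`, and every spectral
function `W diag(g) Wᵀ` acts on it as multiplication by `g (Λ_N)`. Hence the error
`u₂ - A^{-α} f` is the multiple `s f` with `s = r₁(Λ_N) r₂(Λ_N) Λ_N^{-2} - Λ_N^{-α}`, and since
`‖c f‖²_{A^γ} = c² Λ_N^γ`, the ratio of norms is `|s| Λ_N`. Inserting `r_i(Λ_N) = Λ_N^{1-α_i} - E_i`
gives the formula; at `Λ_N = 1` it is `|(1 - E₁)(1 - E₂) - 1| = E₁ + E₂ - E₁E₂`.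
-/

section Spectral

variable {N : ℕ} {W : Matrix (Fin N) (Fin N) ℝ}

theorem spectral_mulVec_col (hW : Wᵀ * W = 1) (g : Fin N → ℝ) (i : Fin N) :
    (W * diagonal g * Wᵀ) *ᵥ Wᵀ i = g i • Wᵀ i := by
  have hcol : Wᵀ i = W *ᵥ Pi.single i 1 := by
    ext k; simp [mulVec_single]
  rw [hcol, mulVec_mulVec, Matrix.mul_assoc, Matrix.mul_assoc, hW, Matrix.mul_one,
    ← mulVec_mulVec, diagonal_mulVec_single, mul_one, ← mulVec_smul, ← Pi.single_smul, smul_eq_mul,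
    mul_one]

theorem col_dotProduct_col_self (hW : Wᵀ * W = 1) (i : Fin N) : Wᵀ i ⬝ᵥ Wᵀ i = 1 := by
  simpa [Matrix.mul_apply, dotProduct] using congr_fun (congr_fun hW i) i

variable (D : Fin N → ℝ)

theorem matFun_mulVec_col (hW : Wᵀ * W = 1) (r : ℝ → ℝ) (i : Fin N) :
    matFun W D r *ᵥ Wᵀ i = r (D i) • Wᵀ i :=
  spectral_mulVec_col hW _ i

theorem matPow_mulVec_col (hW : Wᵀ * W = 1) (γ : ℝ) (i : Fin N) :
    matPow W D γ *ᵥ Wᵀ i = D i ^ γ • Wᵀ i :=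
  spectral_mulVec_col hW _ i

theorem wnorm_smul_col (hW : Wᵀ * W = 1) (γ c : ℝ) (i : Fin N) :
    wnorm W D γ (c • Wᵀ i) = |c| * √(D i ^ γ) := by
  rw [wnorm, mulVec_smul, matPow_mulVec_col D hW, smul_smul, smul_dotProduct, dotProduct_smul,
    col_dotProduct_col_self hW, smul_eq_mul, smul_eq_mul, mul_one, ← mul_assoc, ← sq,
    sqrt_mul (sq_nonneg c), sqrt_sq_eq_abs]

theorem wnorm_one_smul_col_div_wnorm_neg_one_col (hW : Wᵀ * W = 1) {i : Fin N} (hDi : 0 < D i)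
    (c : ℝ) : wnorm W D 1 (c • Wᵀ i) / wnorm W D (-1) (Wᵀ i) = |c| * D i := by
  have h := wnorm_smul_col D hW (-1) 1 i
  rw [one_smul, abs_one, one_mul] at h
  rw [wnorm_smul_col D hW, h, rpow_one, rpow_neg_one, sqrt_inv, div_inv_eq_mul, mul_assoc,
    mul_self_sqrt hDi.le]

end Spectral

theorem stmt19_general {N : ℕ} (W : Matrix (Fin N) (Fin N) ℝ) (D : Fin N → ℝ)
    (hW : Wᵀ * W = 1) (hD : ∀ i, 0 < D i)
    (i0 : Fin N) (ΛN : ℝ) (hi0 : D i0 = ΛN)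
    (α₁ α₂ E₁ E₂ : ℝ)
    (hE₁ : E₁ ≤ 1)
    (r₁ r₂ : ℝ → ℝ)
    (hr₁ : ∀ t ∈ Set.Ioc (0 : ℝ) 1, |r₁ t - t ^ (1 - α₁)| ≤ E₁)
    (hr₂ : ∀ t ∈ Set.Ioc (0 : ℝ) 1, |r₂ t - t ^ (1 - α₂)| ≤ E₂)
    (ha₁ : r₁ ΛN - ΛN ^ (1 - α₁) = -E₁)
    (ha₂ : r₂ ΛN - ΛN ^ (1 - α₂) = -E₂)
    (f : Fin N → ℝ) (hf : f = fun k => W k i0)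
    (u₂ : Fin N → ℝ)
    (hu₂ : u₂ = (matFun W D r₁).mulVec
      ((matFun W D r₂).mulVec ((matPow W D (-2)).mulVec f))) :
    wnorm W D 1 (u₂ - (matPow W D (-(α₁ + α₂))).mulVec f) / wnorm W D (-1) f =
      |(ΛN ^ (1 - α₁) - E₁) * (ΛN ^ (1 - α₂) - E₂) * ΛN⁻¹ - ΛN ^ (1 - (α₁ + α₂))| ∧
    (ΛN = 1 →
      wnorm W D 1 (u₂ - (matPow W D (-(α₁ + α₂))).mulVec f) / wnorm W D (-1) f =
        E₁ + E₂ - E₁ * E₂) := by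
  have hΛ : 0 < ΛN := hi0 ▸ hD i0
  have hcol : f = Wᵀ i0 := hf
  set s := r₁ ΛN * r₂ ΛN * ΛN ^ (-2 : ℝ) - ΛN ^ (-(α₁ + α₂))
  have herr : u₂ - matPow W D (-(α₁ + α₂)) *ᵥ f = s • f := by
    simp only [hu₂, hcol, matFun_mulVec_col D hW, matPow_mulVec_col D hW, mulVec_smul, smul_smul,
      hi0, ← sub_smul, s]
    ring_nf
  have hscaled : s * ΛN =
      (ΛN ^ (1 - α₁) - E₁) * (ΛN ^ (1 - α₂) - E₂) * ΛN⁻¹ - ΛN ^ (1 - (α₁ + α₂)) := by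
    have hpow : ∀ γ : ℝ, ΛN ^ γ * ΛN = ΛN ^ (γ + 1) := fun γ => by
      rw [rpow_add hΛ, rpow_one]
    calc s * ΛN = r₁ ΛN * r₂ ΛN * (ΛN ^ (-2 : ℝ) * ΛN) - ΛN ^ (-(α₁ + α₂)) * ΛN := by ring
      _ = _ := by
        rw [hpow, hpow, show (-2 : ℝ) + 1 = -1 by norm_num, rpow_neg_one,
          show -(α₁ + α₂) + 1 = 1 - (α₁ + α₂) by ring,
          show r₁ ΛN = ΛN ^ (1 - α₁) - E₁ by linarith, show r₂ ΛN = ΛN ^ (1 - α₂) - E₂ by linarith]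
  have hmain : wnorm W D 1 (u₂ - matPow W D (-(α₁ + α₂)) *ᵥ f) / wnorm W D (-1) f =
      |(ΛN ^ (1 - α₁) - E₁) * (ΛN ^ (1 - α₂) - E₂) * ΛN⁻¹ - ΛN ^ (1 - (α₁ + α₂))| := by
    rw [herr, hcol, wnorm_one_smul_col_div_wnorm_neg_one_col D hW (hD i0), hi0, ← hscaled,
      abs_mul, abs_of_pos hΛ]
  refine ⟨hmain, fun hΛ1 => ?_⟩
  have hE₁0 : 0 ≤ E₁ := (abs_nonneg _).trans (hr₁ 1 ⟨one_pos, le_rfl⟩)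
  have hE₂0 : 0 ≤ E₂ := (abs_nonneg _).trans (hr₂ 1 ⟨one_pos, le_rfl⟩)
  rw [hmain, hΛ1, one_rpow, one_rpow, one_rpow, inv_one, mul_one,
    show (1 - E₁) * (1 - E₂) - 1 = -(E₁ + E₂ - E₁ * E₂) by ring, abs_neg,
    abs_of_nonneg (by nlinarith)]

/-- On the top eigenvector `f = Ψ_N` (eigenvalue `Λ_N`), the two-step approximation
`u₂ = r₁(A) r₂(A) A^{-2} f` of `A^{-α} f`, where the errors of `r₁, r₂` attain `-E₁, -E₂`
at `Λ_N`, satisfies `‖u₂ - A^{-α}f‖_A / ‖f‖_{A^{-1}} =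
|(Λ_N^{1-α₁} - E₁)(Λ_N^{1-α₂} - E₂) Λ_N^{-1} - Λ_N^{1-α}|`, which equals
`E₁ + E₂ - E₁E₂` when `Λ_N = 1`. -/
theorem stmt19 {N : ℕ} (W : Matrix (Fin N) (Fin N) ℝ) (D : Fin N → ℝ)
    (hW : Wᵀ * W = 1) (hD : ∀ i, 0 < D i) (hD1 : ∀ i, D i ≤ 1)
    (i0 : Fin N) (ΛN : ℝ) (hi0 : D i0 = ΛN) (hmax : ∀ i, D i ≤ ΛN)
    (α₁ α₂ E₁ E₂ : ℝ) (hα₁ : 0 < α₁) (hα₂ : 0 < α₂) (hα : α₁ + α₂ < 1)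
    (hE₁ : E₁ ≤ 1) (hE₂ : E₂ ≤ 1)
    (r₁ r₂ : ℝ → ℝ)
    (hr₁ : ∀ t ∈ Set.Ioc (0 : ℝ) 1, |r₁ t - t ^ (1 - α₁)| ≤ E₁)
    (hr₂ : ∀ t ∈ Set.Ioc (0 : ℝ) 1, |r₂ t - t ^ (1 - α₂)| ≤ E₂)
    (ha₁ : r₁ ΛN - ΛN ^ (1 - α₁) = -E₁)
    (ha₂ : r₂ ΛN - ΛN ^ (1 - α₂) = -E₂)
    (f : Fin N → ℝ) (hf : f = fun k => W k i0)
    (u₂ : Fin N → ℝ)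
    (hu₂ : u₂ = (matFun W D r₁).mulVec
      ((matFun W D r₂).mulVec ((matPow W D (-2)).mulVec f))) :
    wnorm W D 1 (u₂ - (matPow W D (-(α₁ + α₂))).mulVec f) / wnorm W D (-1) f =
      |(ΛN ^ (1 - α₁) - E₁) * (ΛN ^ (1 - α₂) - E₂) * ΛN⁻¹ - ΛN ^ (1 - (α₁ + α₂))| ∧
    (ΛN = 1 →
      wnorm W D 1 (u₂ - (matPow W D (-(α₁ + α₂))).mulVec f) / wnorm W D (-1) f =
        E₁ + E₂ - E₁ * E₂) :=
  stmt19_general W D hW hD i0 ΛN hi0 α₁ α₂ E₁ E₂ hE₁ r₁ r₂ hr₁ hr₂ ha₁ ha₂ f hf u₂ hu₂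
end
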